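/- Let I be an informativeness predicate on subsets of ℤ^d satisfying the SIN assumption, let 0 ≤ r_a and r_a + 1 ≤ r_b, and let A_{r_a} = {v ∈ ℤ^d : I(S_{r_a}(v))} and A_{r_b} = {v ∈ ℤ^d : I(S_{r_b}(v))}. If A_{r_a} is nonempty and A_{r_a} ≠ ℤ^d, then A_{r_a} is a strict subset of A_{r_b}: there exists a voxel v with I(S_{r_b}(v)) but not I(S_{r_a}(v)). In particular the number of informative searchlights strictly increases from radius r_a to radius r_b. (Paper's Theorem 4.) -/

import Mathlib

/-- Euclidean distance between voxels in the integer lattice `ℤ^d`. -/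
noncomputable def vdist {d : ℕ} (v w : Fin d → ℤ) : ℝ :=
  Real.sqrt (∑ i, ((v i : ℝ) - (w i : ℝ)) ^ 2)

/-- The searchlight of radius `r` centered at voxel `v`. -/
def searchlight {d : ℕ} (r : ℝ) (v : Fin d → ℤ) : Set (Fin d → ℤ) :=
  {w | vdist w v ≤ r}

/-- The superset-informativeness (SIN) assumption. -/
def SIN {d : ℕ} (I : Set (Fin d → ℤ) → Prop) : Prop :=
  ∀ G H : Set (Fin d → ℤ), G.Nonempty → I G → G ⊆ H → I H

/-! Two voxels at distance at most one can be joined by a chain of steps of length one (the unit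
vectors generate `ℤ^d`), so a set of voxels that is neither empty nor everything has a point `p`
inside and a point `q` outside with `vdist p q ≤ 1`. By the triangle inequality
`S_{r_a}(p) ⊆ S_{r_b}(q)`, so SIN makes `q` an informative center at radius `r_b` but not at `r_a`.
-/

open Relation

theorem Relation.ReflTransGen.exists_rel_of_mem_of_notMem {α : Type*} {r : α → α → Prop}
    {s : Set α} {a b : α} (h : ReflTransGen r a b) (ha : a ∈ s) (hb : b ∉ s) :
    ∃ p ∈ s, ∃ q ∉ s, r p q := by
  induction h with
  | refl => exact absurd ha hb
  | @tail c d _ hcd ih =>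
    by_cases hc : c ∈ s
    · exact ⟨c, hc, d, hb, hcd⟩
    · exact ih hc

theorem reflTransGen_add_of_mem_closure {G : Type*} [AddGroup G] {r : G → G → Prop} [Std.Symm r]
    (hr : ∀ a b c, r a b → r (c + a) (c + b)) {g : G}
    (hg : g ∈ AddSubgroup.closure {g | r 0 g}) (a : G) : ReflTransGen r a (a + g) := by
  induction hg using AddSubgroup.closure_induction generalizing a with
  | mem x hx => simpa using ReflTransGen.single (hr 0 x a hx)
  | zero => simpa using ReflTransGen.refl
  | add x y _ _ hx hy => simpa [add_assoc] using (hx a).trans (hy (a + x))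
  | neg x _ hx => simpa using symm (hx (a + -x))

theorem vdist_eq_dist {d : ℕ} (v w : Fin d → ℤ) :
    vdist v w = dist (WithLp.toLp 2 ((↑) ∘ v) : EuclideanSpace ℝ (Fin d))
      (WithLp.toLp 2 ((↑) ∘ w)) := by
  simp [vdist, EuclideanSpace.dist_eq, Real.dist_eq, sq_abs]

theorem vdist_self {d : ℕ} (v : Fin d → ℤ) : vdist v v = 0 := by
  simp [vdist_eq_dist]

theorem vdist_comm {d : ℕ} (v w : Fin d → ℤ) : vdist v w = vdist w v := by
  simp only [vdist_eq_dist, dist_comm]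

theorem vdist_triangle {d : ℕ} (u v w : Fin d → ℤ) : vdist u w ≤ vdist u v + vdist v w := by
  simp only [vdist_eq_dist]
  exact dist_triangle _ _ _

theorem vdist_add_left {d : ℕ} (c v w : Fin d → ℤ) : vdist (c + v) (c + w) = vdist v w := by
  simp [vdist]

theorem vdist_zero_single {d : ℕ} (i : Fin d) : vdist 0 (Pi.single i 1) = 1 := by
  simp [vdist, Pi.single_apply]

theorem reflTransGen_vdist_le_one {d : ℕ} (u w : Fin d → ℤ) :
    ReflTransGen (fun p q => vdist p q ≤ 1) u w := by
  have : Std.Symm (fun p q : Fin d → ℤ => vdist p q ≤ 1) := ⟨fun p q h => vdist_comm p q ▸ h⟩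
  have hgen : w - u ∈ AddSubgroup.closure {g | vdist 0 g ≤ 1} := by
    rw [← Finset.univ_sum_single (w - u)]
    refine AddSubgroup.sum_mem _ fun i _ => ?_
    rw [← mul_one ((w - u) i), ← smul_eq_mul, Pi.single_smul]
    refine AddSubgroup.zsmul_mem _ (AddSubgroup.subset_closure ?_) _
    exact (vdist_zero_single i).le
  have hstep := reflTransGen_add_of_mem_closure
    (fun a b c (h : vdist a b ≤ 1) => (vdist_add_left c a b).symm ▸ h) hgen u
  rwa [add_sub_cancel] at hstep

theorem exists_vdist_le_one_mem_notMem {d : ℕ} {A : Set (Fin d → ℤ)} (hne : A.Nonempty)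
    (hA : A ≠ Set.univ) : ∃ p ∈ A, ∃ q ∉ A, vdist p q ≤ 1 := by
  obtain ⟨u, hu⟩ := hne
  obtain ⟨w, hw⟩ := (Set.ne_univ_iff_exists_notMem A).mp hA
  exact (reflTransGen_vdist_le_one u w).exists_rel_of_mem_of_notMem hu hw

theorem searchlight_nonempty {d : ℕ} {r : ℝ} (hr : 0 ≤ r) (v : Fin d → ℤ) :
    (searchlight r v).Nonempty :=
  ⟨v, by simpa [searchlight, vdist_self] using hr⟩

theorem searchlight_subset_searchlight {d : ℕ} {r s : ℝ} {p q : Fin d → ℤ}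
    (h : r + vdist p q ≤ s) : searchlight r p ⊆ searchlight s q := fun w hw =>
  calc vdist w q ≤ vdist w p + vdist p q := vdist_triangle w p q
    _ ≤ r + vdist p q := by gcongr; exact hw
    _ ≤ s := h

theorem informative_centers_strict_growth_general (d : ℕ)
    (I : Set (Fin d → ℤ) → Prop) (hI : SIN I)
    (ra rb : ℝ) (hra : 0 ≤ ra) (hrb : ra + 1 ≤ rb)
    (hne : {v : Fin d → ℤ | I (searchlight ra v)}.Nonempty)
    (hproper : {v : Fin d → ℤ | I (searchlight ra v)} ≠ Set.univ) :
    {v : Fin d → ℤ | I (searchlight ra v)} ⊂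
      {v : Fin d → ℤ | I (searchlight rb v)} := by
  have grow {p q : Fin d → ℤ} (hp : I (searchlight ra p)) (hpq : vdist p q ≤ 1) :
      I (searchlight rb q) :=
    hI _ _ (searchlight_nonempty hra p) hp (searchlight_subset_searchlight (by linarith))
  obtain ⟨p, hp, q, hq, hpq⟩ := exists_vdist_le_one_mem_notMem hne hproper
  refine (Set.ssubset_iff_of_subset fun v hv => grow hv ?_).mpr ⟨q, grow hp hpq, hq⟩
  simp [vdist_self]

/-- Theorem 4: if the set of informative centers at radius `r_a` is nonempty
and not all of `ℤ^d`, then it is a strict subset of the set of informative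
centers at radius `r_b`. -/
theorem informative_centers_strict_growth (d : ℕ) (hd : 1 ≤ d)
    (I : Set (Fin d → ℤ) → Prop) (hI : SIN I)
    (ra rb : ℝ) (hra : 0 ≤ ra) (hrb : ra + 1 ≤ rb)
    (hne : {v : Fin d → ℤ | I (searchlight ra v)}.Nonempty)
    (hproper : {v : Fin d → ℤ | I (searchlight ra v)} ≠ Set.univ) :
    {v : Fin d → ℤ | I (searchlight ra v)} ⊂
      {v : Fin d → ℤ | I (searchlight rb v)} :=
  informative_centers_strict_growth_general d I hI ra rb hra hrb hne hproper
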